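/- Ownership violations are strong pointer races: if a computation τ.(t, c, u) ∈ mmsem(P) violates ownership, then τ.(t, c, u) is a strong pointer race (SPR). -/
import Mathlib


/-!
A formalization of the framework of Haziza, Holík, Meyer, Wolff,
"Pointer Race Freedom": heaps, concurrent heap-manipulating programs,
the garbage-collected, memory-managed and ownership-respecting semantics,
validity of pointers, (strong) pointer races, and ownership.
-/

namespace PRF

open scoped Classical

noncomputable section

/-- Pointer expressions over addresses `A`, pointer variables `PV`,
with `n` next-selectors. -/
inductive PExp (A PV : Type) (n : ℕ) : Type where
  | var  : PV → PExp A PV n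
  | next : A → Fin n → PExp A PV n

/-- Data expressions over addresses `A` and data variables `DV`. -/
inductive DExp (A DV : Type) : Type where
  | var  : DV → DExp A DV
  | data : A → DExp A DV

/-- Conditions of assert commands: (negated) equalities of pointer or
data variables. -/
inductive Cond (PV DV : Type) : Type where
  | peq : PV → PV → Cond PV DV
  | deq : DV → DV → Cond PV DV
  | not : Cond PV DV → Cond PV DV

/-- Commands of the while-language. -/
inductive Com (D PV DV : Type) (n : ℕ) : Type where
  | assert    : Cond PV DV → Com D PV DV n
  | malloc    : PV → Com D PV DV n                   -- p := malloc
  | free      : PV → Com D PV DV n                   -- free(p)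
  | readNext  : PV → PV → Fin n → Com D PV DV n      -- p := q.next_i
  | writeNext : PV → Fin n → PV → Com D PV DV n      -- p.next_i := q
  | copyP     : PV → PV → Com D PV DV n              -- p := q
  | readData  : DV → PV → Com D PV DV n              -- x := q.data
  | writeData : PV → DV → Com D PV DV n              -- p.data := x
  | opAsgn    : DV → List DV → (List D → D) → Com D PV DV n  -- x := op(x1,…,xk)

/-- A heap: partial valuations of pointer and data expressions. -/
structure Heap (A D PV DV : Type) (n : ℕ) : Type where
  pval : PExp A PV n → Option A
  dval : DExp A DV → Option D

/-- An update of a heap (applied by overriding where defined). -/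
structure Update (A D PV DV : Type) (n : ℕ) : Type where
  pup : PExp A PV n → Option A
  dup : DExp A DV → Option D

/-- An action: an optional (thread, command) pair — `none` only for the
initial base action — together with an update. -/
structure Act (A D PV DV T : Type) (n : ℕ) : Type where
  tc : Option (T × Com D PV DV n)
  up : Update A D PV DV n

/-- The complement of an assert condition. -/
def Cond.negate {PV DV : Type} : Cond PV DV → Cond PV DV
  | .not b => b
  | b => .not b

/-- Pointer variables occurring in a condition. -/
def Cond.pvars {PV DV : Type} : Cond PV DV → Set PV
  | .peq p q => {p, q}
  | .deq _ _ => ∅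
  | .not b => b.pvars

/-- Data variables occurring in a condition. -/
def Cond.dvars {PV DV : Type} : Cond PV DV → Set DV
  | .peq _ _ => ∅
  | .deq x y => {x, y}
  | .not b => b.dvars

/-- Pointer variables used by a command. -/
def Com.pvars {D PV DV : Type} {n : ℕ} : Com D PV DV n → Set PV
  | .assert b => b.pvars
  | .malloc p => {p}
  | .free p => {p}
  | .readNext p q _ => {p, q}
  | .writeNext p _ q => {p, q}
  | .copyP p q => {p, q}
  | .readData _ q => {q}
  | .writeData p _ => {p}
  | .opAsgn _ _ _ => ∅

/-- Data variables used by a command. -/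
def Com.dvars {D PV DV : Type} {n : ℕ} : Com D PV DV n → Set DV
  | .assert b => b.dvars
  | .readData x _ => {x}
  | .writeData _ x => {x}
  | .opAsgn x ys _ => {x} ∪ {y | y ∈ ys}
  | _ => ∅

/-- A concurrent heap-manipulating program: a set of threads `T`, each an
ordinary while-program presented by its control-flow relation `step`;
every variable is shared (`owner = none`) or local to one thread, a thread
uses only shared variables and its own locals, and every control location
offering `assert b` also offers `assert ¬b`. -/
structure Program (D PV DV T : Type) (n : ℕ) : Type 1 where
  Ctrl : Type
  init : T → Ctrl
  step : T → Ctrl → Com D PV DV n → Ctrl → Prop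
  pOwner : PV → Option T
  dOwner : DV → Option T
  assertCompl : ∀ t c b c', step t c (.assert b) c' →
    ∃ c'', step t c (.assert b.negate) c''
  stepPVars : ∀ t c com c', step t c com c' →
    ∀ p ∈ Com.pvars com, pOwner p = none ∨ pOwner p = some t
  stepDVars : ∀ t c com c', step t c com c' →
    ∀ x ∈ Com.dvars com, dOwner x = none ∨ dOwner x = some t

variable {A D PV DV T : Type} {n : ℕ}

/-- The source address of a pointer expression (`a` for `a.next_i`). -/
def PExp.srcAdr : PExp A PV n → Option A
  | .var _ => none
  | .next a _ => some a

/-- The source address of a data expression (`a` for `a.data`). -/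
def DExp.srcAdr : DExp A DV → Option A
  | .var _ => none
  | .data a => some a

/-- The addresses in use in a heap: those occurring in the domain or range
of the pointer valuation or in the domain of the data valuation. -/
def Heap.adr (h : Heap A D PV DV n) : Set A :=
  {a | (∃ pe, h.pval pe ≠ none ∧ PExp.srcAdr pe = some a)
     ∨ (∃ pe, h.pval pe = some a)
     ∨ (∃ de, h.dval de ≠ none ∧ DExp.srcAdr de = some a)}

/-- Restriction `h|P` of a heap to a set `P` of pointer expressions: keeps
`pval` only on `P`, keeps `dval` on data variables and on `a.data` for the
addresses `a` hit by some pointer expression in `P`. -/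
def Heap.restrict (h : Heap A D PV DV n) (P : Set (PExp A PV n)) :
    Heap A D PV DV n where
  pval pe := if pe ∈ P then h.pval pe else none
  dval de := match de with
    | .var x => h.dval (.var x)
    | .data a => if ∃ pe ∈ P, h.pval pe = some a then h.dval (.data a) else none

/-- Applying an update to a heap. -/
def Heap.apply (h : Heap A D PV DV n) (u : Update A D PV DV n) :
    Heap A D PV DV n where
  pval pe := match u.pup pe with | some a => some a | none => h.pval pe
  dval de := match u.dup de with | some d => some d | none => h.dval de

/-- The totally undefined heap. -/
def Heap.empty : Heap A D PV DV n := ⟨fun _ => none, fun _ => none⟩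

/-- `h[pe ↦ a]`. -/
def Heap.pupdate (h : Heap A D PV DV n) (pe : PExp A PV n) (a : A) :
    Heap A D PV DV n :=
  ⟨fun pe' => if pe' = pe then some a else h.pval pe', h.dval⟩

/-- `h[de ↦ d]`. -/
def Heap.dupdate (h : Heap A D PV DV n) (de : DExp A DV) (d : D) :
    Heap A D PV DV n :=
  ⟨h.pval, fun de' => if de' = de then some d else h.dval de'⟩

/-- The domain of the pointer valuation. -/
def Heap.pdom (h : Heap A D PV DV n) : Set (PExp A PV n) := {pe | h.pval pe ≠ none}

/-- The domain of the data valuation. -/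
def Heap.ddom (h : Heap A D PV DV n) : Set (DExp A DV) := {de | h.dval de ≠ none}

/-- heap(τ): the heap resulting from a computation. -/
def heapOf (τ : List (Act A D PV DV T n)) : Heap A D PV DV n :=
  τ.foldl (fun h act => h.apply act.up) Heap.empty

/-- The empty update. -/
def Update.empty : Update A D PV DV n := ⟨fun _ => none, fun _ => none⟩

/-- The singleton pointer update `[pe ↦ a]`. -/
def Update.pt (pe : PExp A PV n) (a : A) : Update A D PV DV n :=
  ⟨fun pe' => if pe' = pe then some a else none, fun _ => none⟩

/-- The singleton data update `[de ↦ d]`. -/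
def Update.dt (de : DExp A DV) (d : D) : Update A D PV DV n :=
  ⟨fun _ => none, fun de' => if de' = de then some d else none⟩

/-- The update of rule (Malloc1): `[p ↦ a, a.data ↦ d, a.next_i ↦ seg]`. -/
def mallocUpdate (seg : A) (p : PV) (a : A) (d : D) : Update A D PV DV n :=
  ⟨fun pe => if pe = PExp.var p then some a
             else if ∃ i, pe = PExp.next a i then some seg else none,
   fun de => if de = DExp.data a then some d else none⟩

/-- The update of the base action: every pointer variable is set to `seg`,
every data variable to an arbitrary initial value. -/
def baseUpdate (seg : A) (dinit : DV → D) : Update A D PV DV n :=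
  ⟨fun pe => match pe with | .var _ => some seg | _ => none,
   fun de => match de with | .var x => some (dinit x) | _ => none⟩

/-- Satisfaction of a condition (with polarity); an assertion and its
negation both pass when an involved pointer holds `seg`. -/
def condSat (seg : A) (h : Heap A D PV DV n) : Bool → Cond PV DV → Prop
  | pol, .not b => condSat seg h (!pol) b
  | pol, .peq p q =>
      (if pol then h.pval (.var p) = h.pval (.var q)
       else h.pval (.var p) ≠ h.pval (.var q))
      ∨ h.pval (.var p) = some seg ∨ h.pval (.var q) = some seg
  | pol, .deq x y =>
      if pol then h.dval (.var x) = h.dval (.var y)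
      else h.dval (.var x) ≠ h.dval (.var y)

/-- One step of the freed-addresses bookkeeping. -/
def freedStep (seg : A) (h : Heap A D PV DV n) (F : Set A)
    (act : Act A D PV DV T n) : Set A :=
  match act.tc with
  | some (_, .free p) =>
      match h.pval (.var p) with
      | some a => if a = seg then F else insert a F
      | none => F
  | some (_, .malloc p) =>
      match act.up.pup (.var p) with
      | some a => F \ {a}
      | none => F
  | _ => F

def freedAux (seg : A) : Heap A D PV DV n → Set A → List (Act A D PV DV T n) → Set A
  | _, F, [] => F
  | h, F, act :: τ => freedAux seg (h.apply act.up) (freedStep seg h F act) τ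

/-- freed(τ): addresses freed and not re-allocated since. -/
def freedOf (seg : A) (τ : List (Act A D PV DV T n)) : Set A :=
  freedAux seg Heap.empty ∅ τ

/-- invalid(a): the pointer expressions invalidated by freeing `a`. -/
def invalidOf (h : Heap A D PV DV n) (a : A) : Set (PExp A PV n) :=
  {pe | h.pval pe = some a} ∪ {pe | ∃ i, pe = PExp.next a i}

/-- One step of the validity bookkeeping. -/
def validStep (seg : A) (h : Heap A D PV DV n) (V : Set (PExp A PV n))
    (act : Act A D PV DV T n) : Set (PExp A PV n) :=
  match act.tc with
  | some (_, .free p) =>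
      match h.pval (.var p) with
      | some a => if a = seg then V else V \ invalidOf h a
      | none => V
  | some (_, .copyP p q) =>
      if PExp.var q ∈ V then insert (PExp.var p) V else V \ {PExp.var p}
  | some (_, .readNext p q i) =>
      match h.pval (.var q) with
      | some a => if PExp.next a i ∈ V then insert (PExp.var p) V else V \ {PExp.var p}
      | none => V \ {PExp.var p}
  | some (_, .writeNext p i q) =>
      match h.pval (.var p) with
      | some a => if PExp.var q ∈ V then insert (PExp.next a i) V else V \ {PExp.next a i}
      | none => V
  | some (_, .malloc p) =>
      match act.up.pup (.var p) with
      | some a =>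
          insert (PExp.var p) V ∪
            {pe | ∃ i, pe = PExp.next a i ∧ act.up.pup (PExp.next a i) ≠ none}
      | none => V
  | _ => V

def validAux (seg : A) : Heap A D PV DV n → Set (PExp A PV n) →
    List (Act A D PV DV T n) → Set (PExp A PV n)
  | _, V, [] => V
  | h, V, act :: τ => validAux seg (h.apply act.up) (validStep seg h V act) τ

/-- valid(τ): the valid pointer expressions after a computation; initially
all pointer variables are valid. -/
def validOf (seg : A) (τ : List (Act A D PV DV T n)) : Set (PExp A PV n) :=
  validAux seg Heap.empty {pe | ∃ p, pe = PExp.var p} τ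

/-- One step of the strong-invalidity bookkeeping: a variable becomes
strongly invalid when its value is obtained by dereferencing an invalid
pointer; strong invalidity is propagated by assignments. -/
def sinvStep (h : Heap A D PV DV n) (V : Set (PExp A PV n)) (S : Set (PV ⊕ DV))
    (act : Act A D PV DV T n) : Set (PV ⊕ DV) :=
  match act.tc with
  | some (_, .readNext p q _) =>
      if PExp.var q ∈ V then S \ {Sum.inl p} else insert (Sum.inl p) S
  | some (_, .readData x q) =>
      if PExp.var q ∈ V then S \ {Sum.inr x} else insert (Sum.inr x) S
  | some (_, .copyP p q) =>
      if Sum.inl q ∈ S then insert (Sum.inl p) S else S \ {Sum.inl p}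
  | some (_, .opAsgn x ys _) =>
      if ∃ y ∈ ys, Sum.inr y ∈ S then insert (Sum.inr x) S else S \ {Sum.inr x}
  | some (_, .malloc p) => S \ {Sum.inl p}
  | _ => S

def sinvAux (seg : A) : Heap A D PV DV n → Set (PExp A PV n) → Set (PV ⊕ DV) →
    List (Act A D PV DV T n) → Set (PV ⊕ DV)
  | _, _, S, [] => S
  | h, V, S, act :: τ =>
      sinvAux seg (h.apply act.up) (validStep seg h V act) (sinvStep h V S act) τ

/-- The strongly invalid variables after a computation. -/
def sinvOf (seg : A) (τ : List (Act A D PV DV T n)) : Set (PV ⊕ DV) :=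
  sinvAux seg Heap.empty {pe | ∃ p, pe = PExp.var p} ∅ τ

/-- An assignment command publishes the owned address `a` if it copies `a`
via a valid pointer into a shared variable, a variable of another thread,
or into the heap outside the owner's cells. -/
def publishedBy (P : Program D PV DV T n) (h : Heap A D PV DV n)
    (V : Set (PExp A PV n)) (W : A → Option T) (com : Com D PV DV n) (a : A) :
    Prop :=
  ∃ t', W a = some t' ∧
    ((∃ p q, com = .copyP p q ∧ PExp.var q ∈ V ∧ h.pval (.var q) = some a ∧
        P.pOwner p ≠ some t')
     ∨ (∃ p q i b, com = .readNext p q i ∧ h.pval (.var q) = some b ∧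
        PExp.next b i ∈ V ∧ h.pval (.next b i) = some a ∧ P.pOwner p ≠ some t')
     ∨ (∃ p i q b, com = .writeNext p i q ∧ PExp.var q ∈ V ∧
        h.pval (.var q) = some a ∧ h.pval (.var p) = some b ∧ W b ≠ some t'))

/-- One step of the ownership bookkeeping: a thread owns an address it
allocated (into one of its local variables) by the most recent allocation,
until the address is freed or published. -/
def ownedStep (seg : A) (P : Program D PV DV T n) (h : Heap A D PV DV n)
    (V : Set (PExp A PV n)) (W : A → Option T) (act : Act A D PV DV T n) :
    A → Option T := fun a =>
  match act.tc with
  | some (t, .malloc p) =>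
      match act.up.pup (.var p) with
      | some b => if a = b then (if P.pOwner p = some t then some t else none) else W a
      | none => W a
  | some (_, .free p) =>
      match h.pval (.var p) with
      | some b => if a = b ∧ b ≠ seg then none else W a
      | none => W a
  | some (_, com) => if publishedBy P h V W com a then none else W a
  | none => W a

def ownedAux (seg : A) (P : Program D PV DV T n) :
    Heap A D PV DV n → Set (PExp A PV n) → (A → Option T) →
      List (Act A D PV DV T n) → (A → Option T)
  | _, _, W, [] => W
  | h, V, W, act :: τ =>
      ownedAux seg P (h.apply act.up) (validStep seg h V act)
        (ownedStep seg P h V W act) τ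

/-- owned(·, τ) as a map from addresses to their owning thread, if any. -/
def ownedOf (seg : A) (P : Program D PV DV T n) (τ : List (Act A D PV DV T n)) :
    A → Option T :=
  ownedAux seg P Heap.empty {pe | ∃ p, pe = PExp.var p} (fun _ => none) τ

/-- The operational semantics: `mm = false` gives the garbage-collected
semantics (only rule (Malloc1)), `mm = true` additionally enables (Malloc2). -/
inductive Sem (seg : A) (P : Program D PV DV T n) (mm : Bool) :
    List (Act A D PV DV T n) → (T → P.Ctrl) → Prop where
  | base (dinit : DV → D) :
      Sem seg P mm [⟨none, baseUpdate seg dinit⟩] P.init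
  | assert {τ ctrl} (t : T) (b : Cond PV DV) (c' : P.Ctrl) :
      Sem seg P mm τ ctrl →
      P.step t (ctrl t) (.assert b) c' →
      condSat seg (heapOf τ) true b →
      Sem seg P mm (τ ++ [⟨some (t, .assert b), Update.empty⟩])
        (Function.update ctrl t c')
  | free {τ ctrl} (t : T) (p : PV) (c' : P.Ctrl) :
      Sem seg P mm τ ctrl →
      P.step t (ctrl t) (.free p) c' →
      Sem seg P mm (τ ++ [⟨some (t, .free p), Update.empty⟩])
        (Function.update ctrl t c')
  | copyP {τ ctrl} (t : T) (p q : PV) (c' : P.Ctrl) (b : A) :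
      Sem seg P mm τ ctrl →
      P.step t (ctrl t) (.copyP p q) c' →
      (heapOf τ).pval (.var q) = some b →
      Sem seg P mm (τ ++ [⟨some (t, .copyP p q), Update.pt (.var p) b⟩])
        (Function.update ctrl t c')
  | readNext {τ ctrl} (t : T) (p q : PV) (i : Fin n) (c' : P.Ctrl) (a b : A) :
      Sem seg P mm τ ctrl →
      P.step t (ctrl t) (.readNext p q i) c' →
      (heapOf τ).pval (.var q) = some a → a ≠ seg →
      (heapOf τ).pval (.next a i) = some b →
      Sem seg P mm (τ ++ [⟨some (t, .readNext p q i), Update.pt (.var p) b⟩])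
        (Function.update ctrl t c')
  | writeNext {τ ctrl} (t : T) (p : PV) (i : Fin n) (q : PV) (c' : P.Ctrl) (a b : A) :
      Sem seg P mm τ ctrl →
      P.step t (ctrl t) (.writeNext p i q) c' →
      (heapOf τ).pval (.var p) = some a → a ≠ seg →
      (heapOf τ).pval (.var q) = some b →
      Sem seg P mm (τ ++ [⟨some (t, .writeNext p i q), Update.pt (.next a i) b⟩])
        (Function.update ctrl t c')
  | readData {τ ctrl} (t : T) (x : DV) (q : PV) (c' : P.Ctrl) (a : A) (d : D) :
      Sem seg P mm τ ctrl →
      P.step t (ctrl t) (.readData x q) c' →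
      (heapOf τ).pval (.var q) = some a → a ≠ seg →
      (heapOf τ).dval (.data a) = some d →
      Sem seg P mm (τ ++ [⟨some (t, .readData x q), Update.dt (.var x) d⟩])
        (Function.update ctrl t c')
  | writeData {τ ctrl} (t : T) (q : PV) (x : DV) (c' : P.Ctrl) (a : A) (d : D) :
      Sem seg P mm τ ctrl →
      P.step t (ctrl t) (.writeData q x) c' →
      (heapOf τ).pval (.var q) = some a → a ≠ seg →
      (heapOf τ).dval (.var x) = some d →
      Sem seg P mm (τ ++ [⟨some (t, .writeData q x), Update.dt (.data a) d⟩])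
        (Function.update ctrl t c')
  | opAsgn {τ ctrl} (t : T) (x : DV) (ys : List DV) (op : List D → D)
      (c' : P.Ctrl) (ds : List D) :
      Sem seg P mm τ ctrl →
      P.step t (ctrl t) (.opAsgn x ys op) c' →
      ys.mapM (fun y => (heapOf τ).dval (.var y)) = some ds →
      Sem seg P mm (τ ++ [⟨some (t, .opAsgn x ys op), Update.dt (.var x) (op ds)⟩])
        (Function.update ctrl t c')
  | malloc1 {τ ctrl} (t : T) (p : PV) (c' : P.Ctrl) (a : A) (d : D) :
      Sem seg P mm τ ctrl →
      P.step t (ctrl t) (.malloc p) c' →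
      a ∉ (heapOf τ).adr →
      Sem seg P mm (τ ++ [⟨some (t, .malloc p), mallocUpdate seg p a d⟩])
        (Function.update ctrl t c')
  | malloc2 {τ ctrl} (t : T) (p : PV) (c' : P.Ctrl) (a : A) :
      mm = true →
      Sem seg P mm τ ctrl →
      P.step t (ctrl t) (.malloc p) c' →
      a ∈ freedOf seg τ →
      Sem seg P mm (τ ++ [⟨some (t, .malloc p), Update.pt (.var p) a⟩])
        (Function.update ctrl t c')

/-- The garbage-collected semantics gcsem(P). -/
def gcsem (seg : A) (P : Program D PV DV T n) : Set (List (Act A D PV DV T n)) :=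
  {τ | ∃ ctrl, Sem seg P false τ ctrl}

/-- The memory-managed semantics mmsem(P). -/
def mmsem (seg : A) (P : Program D PV DV T n) : Set (List (Act A D PV DV T n)) :=
  {τ | ∃ ctrl, Sem seg P true τ ctrl}

/-- The pointer variables a command frees, dereferences, or uses in an
assertion. -/
def racyVars {D PV DV : Type} {n : ℕ} : Com D PV DV n → Set PV
  | .free p => {p}
  | .readNext _ q _ => {q}
  | .writeNext p _ _ => {p}
  | .readData _ q => {q}
  | .writeData p _ => {p}
  | .assert b => b.pvars
  | _ => ∅

/-- The action `act` raises a pointer race after `τ`. -/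
def isPRStep (seg : A) (τ : List (Act A D PV DV T n)) (act : Act A D PV DV T n) :
    Prop :=
  ∃ t com, act.tc = some (t, com) ∧ ∃ p ∈ racyVars com, PExp.var p ∉ validOf seg τ

/-- The computation `σ` is a pointer race. -/
def isPR (seg : A) (σ : List (Act A D PV DV T n)) : Prop :=
  ∃ τ act, σ = τ ++ [act] ∧ isPRStep seg τ act

/-- A set of computations is PRF if it contains no pointer race. -/
def SetPRF (seg : A) (S : Set (List (Act A D PV DV T n))) : Prop :=
  ∀ σ ∈ S, ¬ isPR seg σ

/-- A computation is PRF if none of its prefixes is a pointer race. -/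
def CompPRF (seg : A) (τ : List (Act A D PV DV T n)) : Prop :=
  ∀ σ, σ <+: τ → ¬ isPR seg σ

/-- The action `act` raises a strong pointer race after `τ`. -/
def isSPRStep (seg : A) (τ : List (Act A D PV DV T n)) (act : Act A D PV DV T n) :
    Prop :=
  ∃ t com, act.tc = some (t, com) ∧
    ((∃ p : PV,
        (com = .free p ∨ (∃ i q, com = .writeNext p i q) ∨ (∃ x, com = .writeData p x)) ∧
        PExp.var p ∉ validOf seg τ)
     ∨ (∃ q : PV,
        ((∃ p i, com = .readNext p q i) ∨ (∃ x, com = .readData x q)) ∧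
        Sum.inl q ∈ sinvOf seg τ)
     ∨ (∃ b, com = .assert b ∧
        ((∃ p ∈ Cond.pvars b, Sum.inl p ∈ sinvOf seg τ)
         ∨ (∃ x ∈ Cond.dvars b, Sum.inr x ∈ sinvOf seg τ))))

/-- The computation `σ` is a strong pointer race. -/
def isSPR (seg : A) (σ : List (Act A D PV DV T n)) : Prop :=
  ∃ τ act, σ = τ ++ [act] ∧ isSPRStep seg τ act

/-- A set of computations is SPRF if it contains no strong pointer race. -/
def SetSPRF (seg : A) (S : Set (List (Act A D PV DV T n))) : Prop :=
  ∀ σ ∈ S, ¬ isSPR seg σ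

/-- A computation is SPRF if none of its prefixes is a strong pointer race. -/
def CompSPRF (seg : A) (τ : List (Act A D PV DV T n)) : Prop :=
  ∀ σ, σ <+: τ → ¬ isSPR seg σ

/-- The action `act` extending `τ` violates ownership. -/
def violatesOwnership (seg : A) (P : Program D PV DV T n)
    (τ : List (Act A D PV DV T n)) (act : Act A D PV DV T n) : Prop :=
  ∃ t com, act.tc = some (t, com) ∧
    ∃ p : PV,
      (com = .free p ∨ (∃ i q, com = .writeNext p i q) ∨ (∃ x, com = .writeData p x)) ∧
      ∃ a t', (heapOf τ).pval (.var p) = some a ∧ ownedOf seg P τ a = some t' ∧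
        (t' ≠ t ∨ P.pOwner p = none)

/-- The ownership-respecting semantics resmmsem(P): the computations of
mmsem(P) none of whose actions violates ownership. -/
def resmmsem (seg : A) (P : Program D PV DV T n) : Set (List (Act A D PV DV T n)) :=
  {σ | σ ∈ mmsem seg P ∧ ∀ τ act, (τ ++ [act]) <+: σ → ¬ violatesOwnership seg P τ act}

/-- The extension of an address map to pointer expressions. -/
def mapPExp (f : A → A) : PExp A PV n → PExp A PV n
  | .var p => .var p
  | .next a i => .next (f a) i

/-- The extension of an address map to data expressions. -/
def mapDExp (f : A → A) : DExp A DV → DExp A DV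
  | .var x => .var x
  | .data a => .data (f a)

/-- `f` is a heap isomorphism from `h1` to `h2`: a bijection between the
addresses in use whose extension to expressions (with `f seg = seg`) is a
bijection between the domains and is compatible with the valuations. -/
structure IsHeapIso (seg : A) (h1 h2 : Heap A D PV DV n) (f : A → A) : Prop where
  fseg : f seg = seg
  adrBij : Set.BijOn f h1.adr h2.adr
  pdomBij : Set.BijOn (mapPExp f) h1.pdom h2.pdom
  ddomBij : Set.BijOn (mapDExp f) h1.ddom h2.ddom
  pcompat : ∀ pe ∈ h1.pdom, h2.pval (mapPExp f pe) = (h1.pval pe).map f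
  dcompat : ∀ de ∈ h1.ddom, h2.dval (mapDExp f de) = h1.dval de

/-- `h1 ≅ h2`. -/
def HeapIso (seg : A) (h1 h2 : Heap A D PV DV n) : Prop :=
  ∃ f, IsHeapIso seg h1 h2 f

/-- Heap equivalence of computations: same projection to (thread, command)
pairs and isomorphic valid-restricted heaps. -/
def heapEquiv (seg : A) (τ σ : List (Act A D PV DV T n)) : Prop :=
  τ.map Act.tc = σ.map Act.tc ∧
  HeapIso seg ((heapOf τ).restrict (validOf seg τ))
    ((heapOf σ).restrict (validOf seg σ))

/-- The owning pointers after `τ`: valid pointer expressions whose target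
is owned, together with valid next selectors of owned addresses. -/
def ownpOf (seg : A) (P : Program D PV DV T n) (τ : List (Act A D PV DV T n)) :
    Set (PExp A PV n) :=
  {pe | pe ∈ validOf seg τ ∧
    ((∃ a t, (heapOf τ).pval pe = some a ∧ ownedOf seg P τ a = some t)
     ∨ (∃ a i t, pe = PExp.next a i ∧ ownedOf seg P τ a = some t))}

/-- The target and source addresses of a pointer expression in a heap. -/
def exprAdrs (h : Heap A D PV DV n) (pe : PExp A PV n) : Set A :=
  {a | h.pval pe = some a} ∪ {a | PExp.srcAdr pe = some a}

/-- A set of owning pointers is coherent if owning pointers sharing a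
target or source address are included or excluded together. -/
def Coherent (seg : A) (P : Program D PV DV T n) (τ : List (Act A D PV DV T n))
    (O : Set (PExp A PV n)) : Prop :=
  ∀ pe ∈ ownpOf seg P τ, ∀ pe' ∈ ownpOf seg P τ,
    (∃ a, a ∈ exprAdrs (heapOf τ) pe ∧ a ∈ exprAdrs (heapOf τ) pe') →
    (pe ∈ O ↔ pe' ∈ O)

/-- The addresses occurring in a set of pointer expressions. -/
def adrsOfSet (h : Heap A D PV DV n) (O : Set (PExp A PV n)) : Set A :=
  ⋃ pe ∈ O, exprAdrs h pe


/-! ### Auxiliary lemmas -/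

lemma heapOf_snoc (τ : List (Act A D PV DV T n)) (a : Act A D PV DV T n) :
    heapOf (τ ++ [a]) = (heapOf τ).apply a.up := by
  simp [heapOf, List.foldl_append]

lemma validAux_snoc (seg : A) (a : Act A D PV DV T n) :
    ∀ (τ : List (Act A D PV DV T n)) (h : Heap A D PV DV n) (V : Set (PExp A PV n)),
    validAux seg h V (τ ++ [a]) =
      validStep seg (τ.foldl (fun h act => h.apply act.up) h) (validAux seg h V τ) a
  | [], _, _ => rfl
  | act :: τ, h, V => by
      simp only [List.cons_append, validAux, List.foldl_cons]
      exact validAux_snoc seg a τ _ _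

lemma validOf_snoc (seg : A) (τ : List (Act A D PV DV T n)) (a : Act A D PV DV T n) :
    validOf seg (τ ++ [a]) = validStep seg (heapOf τ) (validOf seg τ) a :=
  validAux_snoc seg a τ _ _

lemma freedAux_snoc (seg : A) (a : Act A D PV DV T n) :
    ∀ (τ : List (Act A D PV DV T n)) (h : Heap A D PV DV n) (F : Set A),
    freedAux seg h F (τ ++ [a]) =
      freedStep seg (τ.foldl (fun h act => h.apply act.up) h) (freedAux seg h F τ) a
  | [], _, _ => rfl
  | act :: τ, h, F => by
      simp only [List.cons_append, freedAux, List.foldl_cons]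
      exact freedAux_snoc seg a τ _ _

lemma freedOf_snoc (seg : A) (τ : List (Act A D PV DV T n)) (a : Act A D PV DV T n) :
    freedOf seg (τ ++ [a]) = freedStep seg (heapOf τ) (freedOf seg τ) a :=
  freedAux_snoc seg a τ _ _

lemma ownedAux_snoc (seg : A) (P : Program D PV DV T n) (a : Act A D PV DV T n) :
    ∀ (τ : List (Act A D PV DV T n)) (h : Heap A D PV DV n)
      (V : Set (PExp A PV n)) (W : A → Option T),
    ownedAux seg P h V W (τ ++ [a]) =
      ownedStep seg P (τ.foldl (fun h act => h.apply act.up) h)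
        (validAux seg h V τ) (ownedAux seg P h V W τ) a
  | [], _, _, _ => rfl
  | act :: τ, h, V, W => by
      simp only [List.cons_append, ownedAux, validAux, List.foldl_cons]
      exact ownedAux_snoc seg P a τ _ _ _

lemma ownedOf_snoc (seg : A) (P : Program D PV DV T n)
    (τ : List (Act A D PV DV T n)) (a : Act A D PV DV T n) :
    ownedOf seg P (τ ++ [a]) =
      ownedStep seg P (heapOf τ) (validOf seg τ) (ownedOf seg P τ) a :=
  ownedAux_snoc seg P a τ _ _ _

lemma apply_empty_pval (h : Heap A D PV DV n) :
    (h.apply (Update.empty : Update A D PV DV n)).pval = h.pval := rfl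

lemma apply_pt_pval (h : Heap A D PV DV n) (pe0 : PExp A PV n) (b : A)
    (pe : PExp A PV n) :
    (h.apply (Update.pt pe0 b)).pval pe = if pe = pe0 then some b else h.pval pe := by
  simp only [Heap.apply, Update.pt]
  split_ifs <;> rfl

lemma apply_dt_pval (h : Heap A D PV DV n) (de : DExp A DV) (d : D) :
    (h.apply (Update.dt de d)).pval = h.pval := rfl

lemma apply_malloc_pval (h : Heap A D PV DV n) (seg : A) (p : PV) (a : A) (d : D)
    (pe : PExp A PV n) :
    (h.apply (mallocUpdate seg p a d)).pval pe =
      if pe = PExp.var p then some a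
      else if ∃ i, pe = PExp.next a i then some seg else h.pval pe := by
  simp only [Heap.apply, mallocUpdate]
  split_ifs <;> rfl

/-- The key invariant: `seg` is never freed, all pointers to freed addresses
are invalid, and valid pointer variables to owned addresses are locals of
the owning thread. -/
lemma sem_inv {seg : A} {P : Program D PV DV T n} {mm : Bool}
    {σ : List (Act A D PV DV T n)} {ctrl : T → P.Ctrl}
    (hsem : Sem seg P mm σ ctrl) :
    seg ∉ freedOf seg σ ∧
    (∀ a ∈ freedOf seg σ, ∀ pe, (heapOf σ).pval pe = some a →
      pe ∉ validOf seg σ) ∧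
    (∀ a t', ownedOf seg P σ a = some t' →
      ∀ p : PV, PExp.var p ∈ validOf seg σ →
        (heapOf σ).pval (.var p) = some a → P.pOwner p = some t') := by


  induction hsem with
  | base dinit =>
      refine ⟨?_, ?_, ?_⟩ <;>
        simp [freedOf, freedAux, freedStep, validOf, validAux, validStep,
          ownedOf, ownedAux, ownedStep]
  | assert t b c' hτ hstep hsat ih =>
      obtain ⟨ih1, ih2, ih3⟩ := ih
      rw [freedOf_snoc, validOf_snoc, ownedOf_snoc, heapOf_snoc]
      simp only [freedStep, validStep, ownedStep, apply_empty_pval]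
      refine ⟨ih1, ih2, ?_⟩
      intro x t' ho p' hval hpv
      split_ifs at ho with hpub
      exact ih3 x t' ho p' hval hpv
  | free t p c' hτ hstep ih =>
      rename_i τ ctrl
      obtain ⟨ih1, ih2, ih3⟩ := ih
      rw [freedOf_snoc, validOf_snoc, ownedOf_snoc, heapOf_snoc]
      simp only [freedStep, validStep, ownedStep, apply_empty_pval]
      cases hb : (heapOf τ).pval (.var p) with
      | none => exact ⟨ih1, ih2, ih3⟩
      | some b =>
          by_cases hbs : b = seg
          · simp only [if_pos hbs]
            refine ⟨ih1, ih2, ?_⟩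
            intro x t' ho p' hval hpv
            rw [if_neg (by intro hc; exact hc.2 hbs)] at ho
            exact ih3 x t' ho p' hval hpv
          · simp only [if_neg hbs]
            refine ⟨?_, ?_, ?_⟩
            · intro hc
              rcases Set.mem_insert_iff.mp hc with hc | hc
              · exact hbs hc.symm
              · exact ih1 hc
            · intro y hy pe hpe
              rcases Set.mem_insert_iff.mp hy with hy | hy
              · intro hmem
                exact hmem.2 (Or.inl (show (heapOf τ).pval pe = some b from hy ▸ hpe))
              · intro hmem
                exact ih2 y hy pe hpe hmem.1
            · intro x t' ho p' hval hpv
              split_ifs at ho with hc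
              exact ih3 x t' ho p' hval.1 hpv
  | copyP t p q c' b hτ hstep hq ih =>
      rename_i τ ctrl
      obtain ⟨ih1, ih2, ih3⟩ := ih
      rw [freedOf_snoc, validOf_snoc, ownedOf_snoc, heapOf_snoc]
      simp only [freedStep, validStep, ownedStep]
      refine ⟨ih1, ?_, ?_⟩
      · intro y hy pe hpe
        rw [apply_pt_pval] at hpe
        by_cases hpp : pe = PExp.var p
        · rw [if_pos hpp] at hpe
          have hb : b = y := by injection hpe
          have hqV : PExp.var q ∉ validOf seg τ := ih2 y hy _ (hb ▸ hq)
          rw [if_neg hqV]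
          intro hmem
          exact hmem.2 hpp
        · rw [if_neg hpp] at hpe
          have hpe' := ih2 y hy pe hpe
          split_ifs
          · intro hmem
            rcases Set.mem_insert_iff.mp hmem with hmem | hmem
            · exact hpp hmem
            · exact hpe' hmem
          · intro hmem
            exact hpe' hmem.1
      · intro x t' ho p' hval hpv
        split_ifs at ho with hpub
        rw [apply_pt_pval] at hpv
        by_cases hpp : p' = p
        · subst hpp
          rw [if_pos rfl] at hpv
          have hb : b = x := by injection hpv
          subst hb
          by_cases hqV : PExp.var q ∈ validOf seg τ
          · by_contra hne
            exact hpub ⟨t', ho, Or.inl ⟨p', q, rfl, hqV, hq, hne⟩⟩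
          · rw [if_neg hqV] at hval
            exact absurd rfl hval.2
        · have hne : (PExp.var p' : PExp A PV n) ≠ PExp.var p := by
            intro hc; exact hpp (by injection hc)
          rw [if_neg hne] at hpv
          have hvalV : PExp.var p' ∈ validOf seg τ := by
            split_ifs at hval
            · rcases Set.mem_insert_iff.mp hval with hval | hval
              · exact absurd hval hne
              · exact hval
            · exact hval.1
          exact ih3 x t' ho p' hvalV hpv
  | readNext t p q i c' a b hτ hstep hq ha hnext ih =>
      rename_i τ ctrl
      obtain ⟨ih1, ih2, ih3⟩ := ih
      rw [freedOf_snoc, validOf_snoc, ownedOf_snoc, heapOf_snoc]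
      simp only [freedStep, validStep, ownedStep, hq]
      refine ⟨ih1, ?_, ?_⟩
      · intro y hy pe hpe
        rw [apply_pt_pval] at hpe
        by_cases hpp : pe = PExp.var p
        · rw [if_pos hpp] at hpe
          have hb : b = y := by injection hpe
          have hnV : PExp.next a i ∉ validOf seg τ := ih2 y hy _ (hb ▸ hnext)
          rw [if_neg hnV]
          intro hmem
          exact hmem.2 hpp
        · rw [if_neg hpp] at hpe
          have hpe' := ih2 y hy pe hpe
          split_ifs
          · intro hmem
            rcases Set.mem_insert_iff.mp hmem with hmem | hmem
            · exact hpp hmem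
            · exact hpe' hmem
          · intro hmem
            exact hpe' hmem.1
      · intro x t' ho p' hval hpv
        split_ifs at ho with hpub
        rw [apply_pt_pval] at hpv
        by_cases hpp : p' = p
        · subst hpp
          rw [if_pos rfl] at hpv
          have hb : b = x := by injection hpv
          subst hb
          by_cases hnV : PExp.next a i ∈ validOf seg τ
          · by_contra hne
            exact hpub ⟨t', ho, Or.inr (Or.inl ⟨p', q, i, a, rfl, hq, hnV, hnext, hne⟩)⟩
          · rw [if_neg hnV] at hval
            exact absurd rfl hval.2
        · have hne : (PExp.var p' : PExp A PV n) ≠ PExp.var p := by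
            intro hc; exact hpp (by injection hc)
          rw [if_neg hne] at hpv
          have hvalV : PExp.var p' ∈ validOf seg τ := by
            split_ifs at hval
            · rcases Set.mem_insert_iff.mp hval with hval | hval
              · exact absurd hval hne
              · exact hval
            · exact hval.1
          exact ih3 x t' ho p' hvalV hpv
  | writeNext t p i q c' a b hτ hstep hp ha hq ih =>
      rename_i τ ctrl
      obtain ⟨ih1, ih2, ih3⟩ := ih
      rw [freedOf_snoc, validOf_snoc, ownedOf_snoc, heapOf_snoc]
      simp only [freedStep, validStep, ownedStep, hp]
      refine ⟨ih1, ?_, ?_⟩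
      · intro y hy pe hpe
        rw [apply_pt_pval] at hpe
        by_cases hpp : pe = PExp.next a i
        · rw [if_pos hpp] at hpe
          have hb : b = y := by injection hpe
          have hqV : PExp.var q ∉ validOf seg τ := ih2 y hy _ (hb ▸ hq)
          rw [if_neg hqV]
          intro hmem
          exact hmem.2 hpp
        · rw [if_neg hpp] at hpe
          have hpe' := ih2 y hy pe hpe
          split_ifs
          · intro hmem
            rcases Set.mem_insert_iff.mp hmem with hmem | hmem
            · exact hpp hmem
            · exact hpe' hmem
          · intro hmem
            exact hpe' hmem.1
      · intro x t' ho p' hval hpv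
        split_ifs at ho with hpub
        rw [apply_pt_pval, if_neg (by intro hc; cases hc)] at hpv
        have hvalV : PExp.var p' ∈ validOf seg τ := by
          split_ifs at hval
          · rcases Set.mem_insert_iff.mp hval with hval | hval
            · cases hval
            · exact hval
          · exact hval.1
        exact ih3 x t' ho p' hvalV hpv
  | readData t x q c' a d hτ hstep hq ha hd ih =>
      obtain ⟨ih1, ih2, ih3⟩ := ih
      rw [freedOf_snoc, validOf_snoc, ownedOf_snoc, heapOf_snoc]
      simp only [freedStep, validStep, ownedStep, apply_dt_pval]
      refine ⟨ih1, ih2, ?_⟩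
      intro y t' ho p' hval hpv
      split_ifs at ho with hpub
      exact ih3 y t' ho p' hval hpv
  | writeData t q x c' a d hτ hstep hq ha hd ih =>
      obtain ⟨ih1, ih2, ih3⟩ := ih
      rw [freedOf_snoc, validOf_snoc, ownedOf_snoc, heapOf_snoc]
      simp only [freedStep, validStep, ownedStep, apply_dt_pval]
      refine ⟨ih1, ih2, ?_⟩
      intro y t' ho p' hval hpv
      split_ifs at ho with hpub
      exact ih3 y t' ho p' hval hpv
  | opAsgn t x ys op c' ds hτ hstep hds ih =>
      obtain ⟨ih1, ih2, ih3⟩ := ih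
      rw [freedOf_snoc, validOf_snoc, ownedOf_snoc, heapOf_snoc]
      simp only [freedStep, validStep, ownedStep, apply_dt_pval]
      refine ⟨ih1, ih2, ?_⟩
      intro y t' ho p' hval hpv
      split_ifs at ho with hpub
      exact ih3 y t' ho p' hval hpv
  | malloc1 t p c' a d hτ hstep hfresh ih =>
      rename_i τ ctrl
      obtain ⟨ih1, ih2, ih3⟩ := ih
      rw [freedOf_snoc, validOf_snoc, ownedOf_snoc, heapOf_snoc]
      have hpup : (mallocUpdate seg p a d : Update A D PV DV n).pup (.var p) = some a := by
        simp [mallocUpdate]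
      simp only [freedStep, validStep, ownedStep, hpup]
      refine ⟨fun hc => ih1 hc.1, ?_, ?_⟩
      · intro y hy pe hpe
        rw [apply_malloc_pval] at hpe
        by_cases hpp : pe = PExp.var p
        · rw [if_pos hpp] at hpe
          have hya : a = y := by injection hpe
          exact absurd hya.symm hy.2
        · rw [if_neg hpp] at hpe
          by_cases hpn : ∃ j, pe = PExp.next a j
          · rw [if_pos hpn] at hpe
            have hys : seg = y := by injection hpe
            exact absurd (hys ▸ hy.1) ih1
          · rw [if_neg hpn] at hpe
            have hpe' := ih2 y hy.1 pe hpe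
            intro hmem
            rcases (Set.mem_union _ _ _).mp hmem with hmem | hmem
            · rcases Set.mem_insert_iff.mp hmem with hmem | hmem
              · exact hpp hmem
              · exact hpe' hmem
            · rcases hmem with ⟨j, hj, _⟩
              exact hpn ⟨j, hj⟩
      · intro y t' ho p' hval hpv
        rw [apply_malloc_pval] at hpv
        by_cases hpp : p' = p
        · subst hpp
          rw [if_pos rfl] at hpv
          have hay : a = y := by injection hpv
          subst hay
          rw [if_pos rfl] at ho
          split_ifs at ho with hown
          have htt : t = t' := by injection ho
          exact htt ▸ hown
        · have hne : (PExp.var p' : PExp A PV n) ≠ PExp.var p := by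
            intro hc; exact hpp (by injection hc)
          rw [if_neg hne, if_neg (by rintro ⟨j, hj⟩; cases hj)] at hpv
          by_cases hya : y = a
          · exact absurd (Or.inr (Or.inl ⟨_, hya ▸ hpv⟩)) hfresh
          · rw [if_neg hya] at ho
            have hvalV : PExp.var p' ∈ validOf seg τ := by
              rcases (Set.mem_union _ _ _).mp hval with hval | hval
              · rcases Set.mem_insert_iff.mp hval with hval | hval
                · exact absurd hval hne
                · exact hval
              · rcases hval with ⟨j, hj, _⟩
                cases hj
            exact ih3 y t' ho p' hvalV hpv
  | malloc2 t p c' a hmm hτ hstep hfreed ih =>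
      rename_i τ ctrl
      obtain ⟨ih1, ih2, ih3⟩ := ih
      rw [freedOf_snoc, validOf_snoc, ownedOf_snoc, heapOf_snoc]
      have hpup : (Update.pt (.var p) a : Update A D PV DV n).pup (.var p) = some a := by
        simp [Update.pt]
      simp only [freedStep, validStep, ownedStep, hpup]
      refine ⟨fun hc => ih1 hc.1, ?_, ?_⟩
      · intro y hy pe hpe
        rw [apply_pt_pval] at hpe
        by_cases hpp : pe = PExp.var p
        · rw [if_pos hpp] at hpe
          have hya : a = y := by injection hpe
          exact absurd hya.symm hy.2
        · rw [if_neg hpp] at hpe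
          have hpe' := ih2 y hy.1 pe hpe
          intro hmem
          rcases (Set.mem_union _ _ _).mp hmem with hmem | hmem
          · rcases Set.mem_insert_iff.mp hmem with hmem | hmem
            · exact hpp hmem
            · exact hpe' hmem
          · rcases hmem with ⟨j, hj, hj2⟩
            exact hj2 (by simp [Update.pt])
      · intro y t' ho p' hval hpv
        rw [apply_pt_pval] at hpv
        by_cases hpp : p' = p
        · subst hpp
          rw [if_pos rfl] at hpv
          have hay : a = y := by injection hpv
          subst hay
          rw [if_pos rfl] at ho
          split_ifs at ho with hown
          have htt : t = t' := by injection ho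
          exact htt ▸ hown
        · have hne : (PExp.var p' : PExp A PV n) ≠ PExp.var p := by
            intro hc; exact hpp (by injection hc)
          rw [if_neg hne] at hpv
          have hvalV : PExp.var p' ∈ validOf seg τ := by
            rcases (Set.mem_union _ _ _).mp hval with hval | hval
            · rcases Set.mem_insert_iff.mp hval with hval | hval
              · exact absurd hval hne
              · exact hval
            · rcases hval with ⟨j, hj, _⟩
              cases hj
          by_cases hya : y = a
          · exact absurd hvalV (ih2 a hfreed _ (hya ▸ hpv))
          · rw [if_neg hya] at ho
            exact ih3 y t' ho p' hvalV hpv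


lemma snoc_eq_snoc {α : Type _} {l₁ l₂ : List α} {a b : α}
    (h : l₁ ++ [a] = l₂ ++ [b]) : l₁ = l₂ ∧ a = b := by
  obtain ⟨h1, h2⟩ := List.append_inj' h rfl
  exact ⟨h1, by injection h2⟩

/-- Inverting a derivation of a non-empty computation. -/
lemma sem_last {seg : A} {P : Program D PV DV T n} {mm : Bool}
    {τ : List (Act A D PV DV T n)} {act : Act A D PV DV T n} {ctrl : T → P.Ctrl}
    (h : Sem seg P mm (τ ++ [act]) ctrl) {t : T} {com : Com D PV DV n}
    (htc : act.tc = some (t, com)) :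
    ∃ ctrl0 : T → P.Ctrl, Sem seg P mm τ ctrl0 ∧ ∃ c', P.step t (ctrl0 t) com c' := by
  generalize hσ : τ ++ [act] = σ at h
  cases h with
  | base dinit =>
      obtain ⟨h1, h2⟩ := snoc_eq_snoc (l₂ := []) hσ
      rw [h2] at htc
      cases htc
  | assert t0 b c' hτ hstep hsat =>
      obtain ⟨h1, h2⟩ := snoc_eq_snoc hσ
      subst h1
      rw [h2] at htc
      injection htc with h3
      injection h3 with ht hcom
      subst ht
      subst hcom
      exact ⟨_, hτ, _, hstep⟩
  | free t0 p0 c' hτ hstep =>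
      obtain ⟨h1, h2⟩ := snoc_eq_snoc hσ
      subst h1
      rw [h2] at htc
      injection htc with h3
      injection h3 with ht hcom
      subst ht
      subst hcom
      exact ⟨_, hτ, _, hstep⟩
  | copyP t0 p0 q0 c' b hτ hstep hq =>
      obtain ⟨h1, h2⟩ := snoc_eq_snoc hσ
      subst h1
      rw [h2] at htc
      injection htc with h3
      injection h3 with ht hcom
      subst ht
      subst hcom
      exact ⟨_, hτ, _, hstep⟩
  | readNext t0 p0 q0 i c' a0 b hτ hstep hq ha hn =>
      obtain ⟨h1, h2⟩ := snoc_eq_snoc hσ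
      subst h1
      rw [h2] at htc
      injection htc with h3
      injection h3 with ht hcom
      subst ht
      subst hcom
      exact ⟨_, hτ, _, hstep⟩
  | writeNext t0 p0 i q0 c' a0 b hτ hstep hp ha hq =>
      obtain ⟨h1, h2⟩ := snoc_eq_snoc hσ
      subst h1
      rw [h2] at htc
      injection htc with h3
      injection h3 with ht hcom
      subst ht
      subst hcom
      exact ⟨_, hτ, _, hstep⟩
  | readData t0 x q0 c' a0 d hτ hstep hq ha hd =>
      obtain ⟨h1, h2⟩ := snoc_eq_snoc hσ
      subst h1
      rw [h2] at htc
      injection htc with h3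
      injection h3 with ht hcom
      subst ht
      subst hcom
      exact ⟨_, hτ, _, hstep⟩
  | writeData t0 q0 x c' a0 d hτ hstep hq ha hd =>
      obtain ⟨h1, h2⟩ := snoc_eq_snoc hσ
      subst h1
      rw [h2] at htc
      injection htc with h3
      injection h3 with ht hcom
      subst ht
      subst hcom
      exact ⟨_, hτ, _, hstep⟩
  | opAsgn t0 x ys op c' ds hτ hstep hds =>
      obtain ⟨h1, h2⟩ := snoc_eq_snoc hσ
      subst h1
      rw [h2] at htc
      injection htc with h3
      injection h3 with ht hcom
      subst ht
      subst hcom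
      exact ⟨_, hτ, _, hstep⟩
  | malloc1 t0 p0 c' a0 d hτ hstep hfresh =>
      obtain ⟨h1, h2⟩ := snoc_eq_snoc hσ
      subst h1
      rw [h2] at htc
      injection htc with h3
      injection h3 with ht hcom
      subst ht
      subst hcom
      exact ⟨_, hτ, _, hstep⟩
  | malloc2 t0 p0 c' a0 hmm2 hτ hstep hfreed =>
      obtain ⟨h1, h2⟩ := snoc_eq_snoc hσ
      subst h1
      rw [h2] at htc
      injection htc with h3
      injection h3 with ht hcom
      subst ht
      subst hcom
      exact ⟨_, hτ, _, hstep⟩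

/-- ownership violations are strong pointer races. -/
theorem ownership_violation_is_spr (seg : A) (P : Program D PV DV T n)
    (τ : List (Act A D PV DV T n)) (act : Act A D PV DV T n)
    (hmem : (τ ++ [act]) ∈ mmsem seg P)
    (hviol : violatesOwnership seg P τ act) :
    isSPR seg (τ ++ [act]) := by
  obtain ⟨t, com, htc, p, hshape, a, t', hpv, hown, hneq⟩ := hviol
  obtain ⟨ctrl, hsem⟩ := hmem
  obtain ⟨ctrl0, hτ, c', hstep⟩ := sem_last hsem htc
  have hval : PExp.var p ∉ validOf seg τ := by
    intro hv
    have hpo : P.pOwner p = some t' := (sem_inv hτ).2.2 a t' hown p hv hpv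
    have hp : p ∈ Com.pvars com := by
      rcases hshape with h | ⟨i, q, h⟩ | ⟨x, h⟩ <;> subst h <;> simp [Com.pvars]
    rcases P.stepPVars t _ com _ hstep p hp with hc | hc
    · rw [hpo] at hc; cases hc
    · rcases hneq with hneq | hneq
      · rw [hpo] at hc
        exact hneq (by injection hc)
      · rw [hneq] at hpo
        cases hpo
  exact ⟨τ, act, rfl, t, com, htc, Or.inl ⟨p, hshape, hval⟩⟩

end

end PRF
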